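/- If the point x ∈ Σ is unreachable, then Γ^{opt}[x] consists exactly of the constant trajectory with null control: Γ^{opt}[x] = {(y,α)} where y(s)=x for all s ∈ [0,T] and α ≡ 0. -/

import Mathlib

open MeasureTheory Set Filter Topology

noncomputable section

/-- Squared Euclidean norm on ℝ². -/
def sq2 (v : ℝ × ℝ) : ℝ := v.1 ^ 2 + v.2 ^ 2

/-- Euclidean norm on ℝ². -/
def enorm2 (v : ℝ × ℝ) : ℝ := Real.sqrt (sq2 v)

/-- `(y, α)` is an admissible trajectory for the Grushin-type dynamics on `[t,T]`,
starting from `x` and constrained to the set `S`:  `y ∈ W^{1,1}`, `α` measurable,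
`y₁' = α₁`, `y₂' = |y₁|^ν α₂` a.e. (in integral form), `y(t) = x`, `y(s) ∈ S`. -/
def Admissible (ν : ℝ) (S : Set (ℝ × ℝ)) (t T : ℝ) (x : ℝ × ℝ)
    (y α : ℝ → ℝ × ℝ) : Prop :=
  Measurable α ∧
  IntervalIntegrable (fun τ => (α τ).1) volume t T ∧
  IntervalIntegrable (fun τ => |(y τ).1| ^ ν * (α τ).2) volume t T ∧
  (∀ s ∈ Icc t T, (y s).1 = x.1 + ∫ τ in t..s, (α τ).1) ∧
  (∀ s ∈ Icc t T, (y s).2 = x.2 + ∫ τ in t..s, |(y τ).1| ^ ν * (α τ).2) ∧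
  (∀ s ∈ Icc t T, y s ∈ S)

/-- `α ∈ L²(t,T)`. -/
def InL2 (α : ℝ → ℝ × ℝ) (t T : ℝ) : Prop :=
  IntervalIntegrable (fun τ => sq2 (α τ)) volume t T

/-- The cost `J_t(x;(y,α))`. -/
def cost (l : ℝ × ℝ → ℝ → ℝ) (g : ℝ × ℝ → ℝ) (t T : ℝ) (y α : ℝ → ℝ × ℝ) : ℝ :=
  (∫ τ in t..T, (sq2 (α τ) / 2 + l (y τ) τ)) + g (y T)

/-- `Γ_t[x]`: admissible trajectories from `(x,t)` with finite cost (`α ∈ L²`). -/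
def Gamma (ν : ℝ) (S : Set (ℝ × ℝ)) (t T : ℝ) (x : ℝ × ℝ) :
    Set ((ℝ → ℝ × ℝ) × (ℝ → ℝ × ℝ)) :=
  {p | Admissible ν S t T x p.1 p.2 ∧ InL2 p.2 t T}

/-- `Γ_t^{opt}[x]`: optimal trajectories. -/
def GammaOpt (ν : ℝ) (S : Set (ℝ × ℝ)) (l : ℝ × ℝ → ℝ → ℝ) (g : ℝ × ℝ → ℝ)
    (t T : ℝ) (x : ℝ × ℝ) : Set ((ℝ → ℝ × ℝ) × (ℝ → ℝ × ℝ)) :=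
  {p | p ∈ Gamma ν S t T x ∧
    ∀ q ∈ Gamma ν S t T x, cost l g t T p.1 p.2 ≤ cost l g t T q.1 q.2}

/-- The value function `u(x,t)`. -/
def valueFun (ν : ℝ) (S : Set (ℝ × ℝ)) (l : ℝ × ℝ → ℝ → ℝ) (g : ℝ × ℝ → ℝ)
    (T : ℝ) (x : ℝ × ℝ) (t : ℝ) : ℝ :=
  sInf ((fun p => cost l g t T p.1 p.2) '' Gamma ν S t T x)

/-- Closed graph property of `Γ_t^{opt}[x]`. -/
def ClosedGraphAt (ν : ℝ) (S : Set (ℝ × ℝ)) (l : ℝ × ℝ → ℝ → ℝ) (g : ℝ × ℝ → ℝ)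
    (t T : ℝ) (x : ℝ × ℝ) : Prop :=
  ∀ (xs : ℕ → ℝ × ℝ) (ys as : ℕ → ℝ → ℝ × ℝ) (y : ℝ → ℝ × ℝ),
    (∀ n, xs n ∈ S) → Tendsto xs atTop (𝓝 x) →
    (∀ n, (ys n, as n) ∈ GammaOpt ν S l g t T (xs n)) →
    TendstoUniformlyOn ys y atTop (Icc t T) →
    ∃ α, (y, α) ∈ GammaOpt ν S l g t T x

/-- Approximation property at `x` for initial time `t`. -/
def ApproxProperty (ν : ℝ) (S : Set (ℝ × ℝ)) (l : ℝ × ℝ → ℝ → ℝ) (g : ℝ × ℝ → ℝ)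
    (t T : ℝ) (x : ℝ × ℝ) : Prop :=
  ∀ y α, (y, α) ∈ Gamma ν S t T x →
    ∀ xs : ℕ → ℝ × ℝ, (∀ n, xs n ∈ S) → Tendsto xs atTop (𝓝 x) →
      ∃ ys as : ℕ → ℝ → ℝ × ℝ,
        (∀ n, (ys n, as n) ∈ Gamma ν S t T (xs n)) ∧
        TendstoUniformlyOn ys y atTop (Icc t T) ∧
        Tendsto (fun n => (∫ τ in t..T, sq2 (as n τ)) - ∫ τ in t..T, sq2 (α τ))
          atTop (𝓝 0) ∧
        Tendsto (fun n => cost l g t T (ys n) (as n)) atTop (𝓝 (cost l g t T y α))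

/-- The point `x` is unreachable: no admissible trajectory with finite cost,
starting from another point of `S`, reaches `x` at time `T`. -/
def Unreachable (ν : ℝ) (S : Set (ℝ × ℝ)) (T : ℝ) (x : ℝ × ℝ) : Prop :=
  ∀ xb ∈ S \ {x}, ¬ ∃ p ∈ Gamma ν S 0 T xb, p.1 T = x

/-- Reachability property of the dynamics at `x`. -/
def ReachProperty (ν : ℝ) (S : Set (ℝ × ℝ)) (T : ℝ) (x : ℝ × ℝ) : Prop :=
  ∀ xs : ℕ → ℝ × ℝ, (∀ n, xs n ∈ S) → Tendsto xs atTop (𝓝 x) →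
    ∃ (δ : ℕ → ℝ) (ys as : ℕ → ℝ → ℝ × ℝ),
      (∀ n, δ n ∈ Icc 0 T) ∧
      (∀ n, Admissible ν S 0 (δ n) (xs n) (ys n) (as n) ∧ InL2 (as n) 0 (δ n) ∧
        ys n (δ n) = x) ∧
      Tendsto (fun n => ∫ τ in (0:ℝ)..(δ n), sq2 (as n τ)) atTop (𝓝 0) ∧
      Tendsto δ atTop (𝓝 0)

/-- `x₁`-convexity of a subset of the plane. -/
def X1Convex (A : Set (ℝ × ℝ)) : Prop :=
  ∀ a b h : ℝ, (a, b) ∈ A → 0 < h → (a + h, b) ∈ A →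
    ∀ t ∈ Icc (0:ℝ) 1, (a + t * h, b) ∈ A

/-- Hypothesis (H1). -/
def HypH1 (S : Set (ℝ × ℝ)) : Prop :=
  ∀ x0 ∈ frontier S, x0.1 ≠ 0 →
    ∃ R > 0, X1Convex (S ∩ Metric.ball x0 R) ∧
      ((S ∩ Metric.ball x0 R ∩ {p | x0.2 < p.2}).Nonempty →
        ∃ C > 0,
          {p : ℝ × ℝ | p.1 = x0.1 ∧ p.2 ∈ Ioc x0.2 (x0.2 + R)} ⊆ S ∨
          {p : ℝ × ℝ | p.1 ∈ Ioc x0.1 (x0.1 + R) ∧ p.2 = x0.2 + C * (p.1 - x0.1)} ⊆ S ∨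
          {p : ℝ × ℝ | p.1 ∈ Ico (x0.1 - R) x0.1 ∧ p.2 = x0.2 + C * (x0.1 - p.1)} ⊆ S) ∧
      ((S ∩ Metric.ball x0 R ∩ {p | p.2 < x0.2}).Nonempty →
        ∃ C > 0,
          {p : ℝ × ℝ | p.1 = x0.1 ∧ p.2 ∈ Ico (x0.2 - R) x0.2} ⊆ S ∨
          {p : ℝ × ℝ | p.1 ∈ Ioc x0.1 (x0.1 + R) ∧ p.2 = x0.2 - C * (p.1 - x0.1)} ⊆ S ∨
          {p : ℝ × ℝ | p.1 ∈ Ico (x0.1 - R) x0.1 ∧ p.2 = x0.2 - C * (x0.1 - p.1)} ⊆ S)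

/-- Hypothesis (H2). -/
def HypH2 (ν : ℝ) (S : Set (ℝ × ℝ)) : Prop :=
  ∀ x0 ∈ frontier S, x0.1 = 0 →
    ∃ R > 0, X1Convex (S ∩ Metric.ball x0 R) ∧
      ((S ∩ Metric.ball x0 R ∩ {p | x0.2 < p.2}).Nonempty →
        ∃ C > 0,
          {p : ℝ × ℝ | p.1 ∈ Ioc 0 R ∧ p.2 = x0.2 + C * p.1 ^ (ν + 1)} ⊆ S ∨
          {p : ℝ × ℝ | p.1 ∈ Ico (-R) 0 ∧ p.2 = x0.2 + C * (-p.1) ^ (ν + 1)} ⊆ S) ∧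
      ((S ∩ Metric.ball x0 R ∩ {p | p.2 < x0.2}).Nonempty →
        ∃ C > 0,
          {p : ℝ × ℝ | p.1 ∈ Ioc 0 R ∧ p.2 = x0.2 - C * p.1 ^ (ν + 1)} ⊆ S ∨
          {p : ℝ × ℝ | p.1 ∈ Ico (-R) 0 ∧ p.2 = x0.2 - C * (-p.1) ^ (ν + 1)} ⊆ S)

/-!
If a trajectory from `x` left `x` at some time `s`, running it backwards from `s` and then resting
would give a trajectory from `y s ≠ x` that reaches `x` at time `T`: the dynamics is odd in the
control, hence reversible. So every trajectory in `Γ[x]` rests at `x`, its cost exceeds that of the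
resting one by `½ ∫ |α|²`, and optimality forces `α = 0` a.e.
-/

section TimeReverse

variable {E : Type*} [NormedAddCommGroup E]

def timeReverse (s : ℝ) (f : ℝ → E) (τ : ℝ) : E :=
  if τ ≤ s then f (s - τ) else 0

theorem timeReverse_of_le {s τ : ℝ} (f : ℝ → E) (h : τ ≤ s) : timeReverse s f τ = f (s - τ) :=
  if_pos h

theorem timeReverse_of_lt {s τ : ℝ} (f : ℝ → E) (h : s < τ) : timeReverse s f τ = 0 :=
  if_neg h.not_ge

theorem Measurable.timeReverse [MeasurableSpace E] {f : ℝ → E} (hf : Measurable f) (s : ℝ) :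
    Measurable (timeReverse s f) :=
  Measurable.ite measurableSet_Iic (hf.comp (measurable_const.sub measurable_id)) measurable_const

theorem intervalIntegrable_timeReverse {f : ℝ → E} {s T : ℝ} (hs : 0 ≤ s) (hsT : s ≤ T)
    (hf : IntervalIntegrable f volume 0 s) :
    IntervalIntegrable (timeReverse s f) volume 0 T := by
  have hrev : IntervalIntegrable (fun τ => f (s - τ)) volume 0 s := by
    simpa using (hf.comp_sub_left s).symm
  have h0s : IntervalIntegrable (timeReverse s f) volume 0 s :=
    hrev.congr fun τ hτ => by
      rw [uIoc_of_le hs] at hτ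
      exact (timeReverse_of_le f hτ.2).symm
  have hsT : IntervalIntegrable (timeReverse s f) volume s T :=
    (intervalIntegrable_const (c := (0 : E))).congr fun τ hτ => by
      rw [uIoc_of_le hsT] at hτ
      exact (timeReverse_of_lt f hτ.1).symm
  exact h0s.trans hsT

variable [NormedSpace ℝ E]

theorem integral_timeReverse {f : ℝ → E} {s r : ℝ} (hs : 0 ≤ s) (hr : 0 ≤ r)
    (hf : IntervalIntegrable f volume 0 s) :
    ∫ τ in 0..r, timeReverse s f τ = ∫ τ in (s - min r s)..s, f τ := by
  have hle : ∀ r, 0 ≤ r → r ≤ s → ∫ τ in 0..r, timeReverse s f τ = ∫ τ in (s - r)..s, f τ := by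
    intro r hr hrs
    have hrev : EqOn (timeReverse s f) (fun τ => f (s - τ)) (uIcc 0 r) := fun τ hτ => by
      rw [uIcc_of_le hr] at hτ
      exact timeReverse_of_le f (hτ.2.trans hrs)
    rw [intervalIntegral.integral_congr hrev, intervalIntegral.integral_comp_sub_left, sub_zero]
  rcases le_total r s with hrs | hsr
  · rw [min_eq_left hrs, hle r hr hrs]
  · have htail : ∫ τ in s..r, timeReverse s f τ = 0 :=
      intervalIntegral.integral_zero_ae <| ae_of_all _ fun τ hτ => by
        rw [uIoc_of_le hsr] at hτ
        exact timeReverse_of_lt f hτ.1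
    rw [min_eq_right hsr, ← hle s hs le_rfl, ← sub_eq_zero,
      intervalIntegral.integral_interval_sub_left (intervalIntegrable_timeReverse hs hsr hf)
        (intervalIntegrable_timeReverse hs le_rfl hf), htail]

end TimeReverse

theorem eq_add_integral_timeReverse_neg {F f : ℝ → ℝ} {c s r : ℝ} (hs : 0 ≤ s) (hr : 0 ≤ r)
    (hf : IntervalIntegrable f volume 0 s) (hF : ∀ u ∈ Icc 0 s, F u = c + ∫ τ in 0..u, f τ) :
    F (s - min r s) = F s + ∫ τ in 0..r, timeReverse s (-f) τ := by
  have hm : s - min r s ∈ Icc 0 s := ⟨by linarith [min_le_right r s], by linarith [le_min hr hs]⟩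
  have hsub : uIcc 0 (s - min r s) ⊆ uIcc 0 s := by
    rw [uIcc_of_le hm.1, uIcc_of_le hs]; exact Icc_subset_Icc le_rfl hm.2
  rw [integral_timeReverse hs hr hf.neg, Pi.neg_def, intervalIntegral.integral_neg, hF _ hm,
    hF s ⟨hs, le_rfl⟩, ← intervalIntegral.integral_interval_sub_left hf (hf.mono_set hsub)]
  ring

theorem Admissible.apply_start {ν T t : ℝ} {S : Set (ℝ × ℝ)} {x : ℝ × ℝ} {y α : ℝ → ℝ × ℝ}
    (h : Admissible ν S t T x y α) (htT : t ≤ T) : y t = x :=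
  Prod.ext (by simpa using h.2.2.2.1 t ⟨le_rfl, htT⟩) (by simpa using h.2.2.2.2.1 t ⟨le_rfl, htT⟩)

theorem reverse_mem_Gamma {ν T s : ℝ} {S : Set (ℝ × ℝ)} {x : ℝ × ℝ} {y α : ℝ → ℝ × ℝ}
    (h : (y, α) ∈ Gamma ν S 0 T x) (hs : s ∈ Icc 0 T) :
    ((fun τ => y (s - min τ s)), timeReverse s (-α)) ∈ Gamma ν S 0 T (y s) := by
  obtain ⟨⟨hα, hint₁, hint₂, hy₁, hy₂, hyS⟩, hL2⟩ := h
  have hsub : uIcc 0 s ⊆ uIcc 0 T := by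
    rw [uIcc_of_le hs.1, uIcc_of_le (hs.1.trans hs.2)]
    exact Icc_subset_Icc le_rfl hs.2
  have hIcc : ∀ u ∈ Icc 0 s, u ∈ Icc 0 T := fun u hu => ⟨hu.1, hu.2.trans hs.2⟩
  have hβ₁ : (fun τ => (timeReverse s (-α) τ).1) = timeReverse s (-fun u => (α u).1) := by
    funext τ; unfold timeReverse; split_ifs <;> simp
  have hβ₂ : (fun τ => |(y (s - min τ s)).1| ^ ν * (timeReverse s (-α) τ).2) =
      timeReverse s (-fun u => |(y u).1| ^ ν * (α u).2) := by
    funext τ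
    rcases le_or_gt τ s with hτ | hτ
    · simp [timeReverse_of_le _ hτ, min_eq_left hτ]
    · simp [timeReverse_of_lt _ hτ]
  have hsq : (fun τ => sq2 (timeReverse s (-α) τ)) = timeReverse s (fun u => sq2 (α u)) := by
    funext τ; unfold timeReverse; split_ifs <;> simp [sq2]
  refine ⟨⟨hα.neg.timeReverse s, ?_, ?_, fun r hr => ?_, fun r hr => ?_, fun r hr => hyS _ ?_⟩, ?_⟩
  · rw [hβ₁]
    exact intervalIntegrable_timeReverse hs.1 hs.2 (hint₁.mono_set hsub).neg
  · rw [hβ₂]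
    exact intervalIntegrable_timeReverse hs.1 hs.2 (hint₂.mono_set hsub).neg
  · rw [hβ₁]
    exact eq_add_integral_timeReverse_neg hs.1 hr.1 (hint₁.mono_set hsub)
      fun u hu => hy₁ u (hIcc u hu)
  · rw [hβ₂]
    exact eq_add_integral_timeReverse_neg hs.1 hr.1 (hint₂.mono_set hsub)
      fun u hu => hy₂ u (hIcc u hu)
  · exact ⟨by linarith [min_le_right r s], by linarith [le_min hr.1 hs.1, hs.2]⟩
  · rw [InL2, hsq]
    exact intervalIntegrable_timeReverse hs.1 hs.2 (hL2.mono_set hsub)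

theorem Unreachable.eq_of_mem_Gamma {ν T s : ℝ} {S : Set (ℝ × ℝ)} {x : ℝ × ℝ}
    {y α : ℝ → ℝ × ℝ} (hun : Unreachable ν S T x) (h : (y, α) ∈ Gamma ν S 0 T x)
    (hs : s ∈ Icc 0 T) : y s = x := by
  by_contra hne
  refine hun (y s) ⟨h.1.2.2.2.2.2 s hs, hne⟩ ⟨_, reverse_mem_Gamma h hs, ?_⟩
  simp only [min_eq_right hs.2, sub_self]
  exact h.1.apply_start (hs.1.trans hs.2)

theorem sq2_nonneg (v : ℝ × ℝ) : 0 ≤ sq2 v := by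
  unfold sq2; positivity

theorem sq2_eq_zero_iff {v : ℝ × ℝ} : sq2 v = 0 ↔ v = 0 := by
  simp [sq2, Prod.ext_iff, add_eq_zero_iff_of_nonneg, sq_nonneg]

theorem sq2_zero : sq2 0 = 0 :=
  sq2_eq_zero_iff.mpr rfl

theorem integral_sq2_nonneg {t T : ℝ} (htT : t ≤ T) (α : ℝ → ℝ × ℝ) :
    0 ≤ ∫ τ in t..T, sq2 (α τ) :=
  intervalIntegral.integral_nonneg htT fun τ _ => sq2_nonneg (α τ)

theorem ae_eq_zero_of_integral_sq2_eq_zero {t T : ℝ} {α : ℝ → ℝ × ℝ} (htT : t ≤ T)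
    (hα : InL2 α t T) (h : ∫ τ in t..T, sq2 (α τ) = 0) :
    ∀ᵐ τ ∂volume.restrict (Icc t T), α τ = 0 := by
  rw [InL2, intervalIntegrable_iff_integrableOn_Ioc_of_le htT] at hα
  rw [intervalIntegral.integral_of_le htT,
    integral_eq_zero_iff_of_nonneg (fun τ => sq2_nonneg (α τ)) hα] at h
  rw [Measure.restrict_congr_set Ioc_ae_eq_Icc.symm]
  filter_upwards [h] with τ hτ using sq2_eq_zero_iff.mp hτ

theorem const_mem_Gamma {ν t T : ℝ} {S : Set (ℝ × ℝ)} {x : ℝ × ℝ} (hx : x ∈ S) :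
    ((fun _ => x), fun _ => 0) ∈ Gamma ν S t T x :=
  ⟨⟨measurable_const, by simp, by simp, by simp, by simp, fun _ _ => hx⟩, by simp [InL2, sq2]⟩

theorem cost_eq_cost_const_add {l : ℝ × ℝ → ℝ → ℝ} {g : ℝ × ℝ → ℝ} {t T : ℝ} {x : ℝ × ℝ}
    {y α : ℝ → ℝ × ℝ} (htT : t ≤ T) (hy : ∀ s ∈ Icc t T, y s = x) (hα : InL2 α t T)
    (hl : IntervalIntegrable (l x) volume t T) :
    cost l g t T y α = cost l g t T (fun _ => x) (fun _ => 0) + (∫ τ in t..T, sq2 (α τ)) / 2 := by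
  have hrun : EqOn (fun τ => sq2 (α τ) / 2 + l (y τ) τ) (fun τ => sq2 (α τ) / 2 + l x τ)
      (uIcc t T) := fun τ hτ => by
    rw [uIcc_of_le htT] at hτ
    simp only [hy τ hτ]
  unfold cost
  rw [hy T ⟨htT, le_rfl⟩, intervalIntegral.integral_congr hrun,
    intervalIntegral.integral_add (hα.div_const 2) hl, intervalIntegral.integral_div]
  simp only [sq2_zero, zero_div, zero_add]
  ring

theorem unreachable_gammaOpt_singleton_general
    (T ν : ℝ) (hT : 0 < T)
    (S : Set (ℝ × ℝ))
    (l : ℝ × ℝ → ℝ → ℝ) (g : ℝ × ℝ → ℝ)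
    (hl : ContinuousOn (fun q : (ℝ × ℝ) × ℝ => l q.1 q.2) (S ×ˢ Icc 0 T))
    (x : ℝ × ℝ) (hx : x ∈ S)
    (hun : Unreachable ν S T x) :
    ((fun _ : ℝ => x), (fun _ : ℝ => ((0 : ℝ), (0 : ℝ)))) ∈ GammaOpt ν S l g 0 T x ∧
    ∀ p ∈ GammaOpt ν S l g 0 T x,
      (∀ s ∈ Icc (0 : ℝ) T, p.1 s = x) ∧
      (∀ᵐ τ ∂(volume.restrict (Icc (0 : ℝ) T)), p.2 τ = 0) := by
  have hlx : IntervalIntegrable (l x) volume 0 T :=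
    (hl.comp (Continuous.continuousOn (f := fun τ => (x, τ)) (by fun_prop))
      fun τ hτ => ⟨hx, hτ⟩).intervalIntegrable_of_Icc hT.le
  have hcost : ∀ p ∈ Gamma ν S 0 T x, cost l g 0 T p.1 p.2 =
      cost l g 0 T (fun _ => x) (fun _ => 0) + (∫ τ in 0..T, sq2 (p.2 τ)) / 2 :=
    fun p hp => cost_eq_cost_const_add hT.le (fun s hs => hun.eq_of_mem_Gamma hp hs) hp.2 hlx
  refine ⟨⟨const_mem_Gamma hx, fun q hq => ?_⟩,
    fun p hp => ⟨fun s hs => hun.eq_of_mem_Gamma hp.1 hs, ?_⟩⟩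
  · change cost l g 0 T (fun _ => x) (fun _ => 0) ≤ _
    rw [hcost q hq]
    linarith [integral_sq2_nonneg hT.le q.2]
  · have hle := hp.2 _ (const_mem_Gamma hx)
    rw [hcost p hp.1] at hle
    exact ae_eq_zero_of_integral_sq2_eq_zero hT.le hp.1.2
      (le_antisymm (by linarith) (integral_sq2_nonneg hT.le p.2))

/-- if `x` is unreachable then `Γ^{opt}[x]` consists exactly of the constant
trajectory `y ≡ x` with null control `α ≡ 0`. -/
theorem unreachable_gammaOpt_singleton
    (T ν : ℝ) (hT : 0 < T) (hν : 0 < ν)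
    (S : Set (ℝ × ℝ)) (hSc : IsCompact S) (hSne : S.Nonempty)
    (l : ℝ × ℝ → ℝ → ℝ) (g : ℝ × ℝ → ℝ)
    (hl : ContinuousOn (fun q : (ℝ × ℝ) × ℝ => l q.1 q.2) (S ×ˢ Icc 0 T))
    (hg : ContinuousOn g S)
    (x : ℝ × ℝ) (hx : x ∈ S)
    (hun : Unreachable ν S T x) :
    ((fun _ : ℝ => x), (fun _ : ℝ => ((0 : ℝ), (0 : ℝ)))) ∈ GammaOpt ν S l g 0 T x ∧
    ∀ p ∈ GammaOpt ν S l g 0 T x,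
      (∀ s ∈ Icc (0 : ℝ) T, p.1 s = x) ∧
      (∀ᵐ τ ∂(volume.restrict (Icc (0 : ℝ) T)), p.2 τ = 0) :=
  unreachable_gammaOpt_singleton_general T ν hT S l g hl x hx hun
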